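/- The operators T_i = (i,i+1) acting on C^n(G,A) satisfy the braid relation: T_i T_{i+1} T_i = T_{i+1} T_i T_{i+1} for all 1 ≤ i ≤ n-1. -/
import Mathlib


variable {G A : Type} [Group G] [AddCommGroup A] [DistribMulAction G A]

/-- The operator `T_i = (i,i+1)` (with `i = j+1` 1-indexed, `j : Fin n` 0-indexed) on
cochains `C^n(G,A)`:
`(T₁ σ)(g₁,…,gₙ) = -g₁ • σ(g₁⁻¹, g₁g₂, g₃,…,gₙ)`,
`(Tᵢ σ)(g₁,…,gₙ) = -σ(g₁,…,g_{i-1}gᵢ, gᵢ⁻¹, gᵢg_{i+1},…,gₙ)` for `1 < i < n`,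
`(Tₙ σ)(g₁,…,gₙ) = -σ(g₁,…,g_{n-1}gₙ, gₙ⁻¹)`. -/
def Tact (n : ℕ) (j : Fin n) (σ : (Fin n → G) → A) : (Fin n → G) → A :=
  fun g =>
    let g' : Fin n → G := fun i =>
      if (i : ℕ) + 1 = (j : ℕ) then g i * g j
      else if i = j then (g j)⁻¹
      else if (i : ℕ) = (j : ℕ) + 1 then g j * g i
      else g i
    if (j : ℕ) = 0 then -(g j • σ g') else -(σ g')

/-- The operators `T_i` satisfy the braid relation `T_i T_{i+1} T_i = T_{i+1} T_i T_{i+1}`. -/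
theorem braid_relation (n : ℕ) (j : Fin n) (h : (j : ℕ) + 1 < n) :
    Tact (G := G) (A := A) n j ∘ Tact n ⟨(j : ℕ) + 1, h⟩ ∘ Tact n j =
      Tact n ⟨(j : ℕ) + 1, h⟩ ∘ Tact n j ∘ Tact n ⟨(j : ℕ) + 1, h⟩ := by
  funext σ g
  by_cases hj : (j:ℕ) = 0
  · simp only [Function.comp_apply, Tact, Fin.ext_iff, hj, smul_smul, smul_neg, neg_neg]
    norm_num
    rw [smul_smul]
    refine congrArg _ (congrArg σ (funext fun i => ?_))
    split_ifs <;> try omega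
    all_goals group
  · simp only [Function.comp_apply, Tact, Fin.ext_iff, smul_smul, smul_neg, neg_neg, if_neg hj]
    norm_num [hj]
    congr 1
    funext i
    split_ifs <;> try omega
    all_goals group
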